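/- arXiv:1909.03478 — 3 statements merged into one kernel-verified Lean document; each statement's English description precedes it below -/
import Mathlib

section
/- Let G = (V, E) and G' = (V, E ∪ {(a,b)}) (or E \ {(a,b)}) differ in a single edge (a,b) with π(a) < π(b), for an injective ranking π. Let A be the set of vertices whose eliminator differs between LFMIS(G, π) and LFMIS(G', π). Then every v ∈ A satisfies π(elim_G(v)) ≥ π(a) and π(elim_{G'}(v)) ≥ π(a). -/
open scoped Classical

variable {V : Type*}

/-- The lexicographically first maximal independent set under ranking `π`:
`v` is in the LFMIS iff no neighbor of strictly smaller rank is in the LFMIS. -/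
noncomputable def lfmis [Fintype V] (G : SimpleGraph V) (π : V → ℝ) : V → Prop :=
  fun v => ∀ u, G.Adj u v → π u < π v → ¬ lfmis G π u
termination_by v => (Finset.univ.filter fun u => π u < π v).card
decreasing_by
  rename_i u _ hlt
  apply Finset.card_lt_card
  constructor
  · intro w hw
    simp only [Finset.mem_filter, Finset.mem_univ, true_and] at hw ⊢
    exact hw.trans hlt
  · intro hsub
    have := hsub (Finset.mem_filter.mpr ⟨Finset.mem_univ u, hlt⟩)
    simp only [Finset.mem_filter, Finset.mem_univ, true_and] at this
    exact lt_irrefl _ this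

/-- The eliminator of `v`: the minimum-rank vertex of `(N(v) ∪ {v}) ∩ LFMIS(G, π)`
(when it exists; otherwise `v` by convention). -/
noncomputable def eliminator [Fintype V] (G : SimpleGraph V) (π : V → ℝ) (v : V) : V :=
  if h : ∃ e, (e = v ∨ G.Adj e v) ∧ lfmis G π e ∧
      ∀ u, (u = v ∨ G.Adj u v) → lfmis G π u → π e ≤ π u
  then h.choose else v

/-!
Every edge that changes has both endpoints of rank at least `π a`, so the two graphs agree on all
adjacencies `u ~ w` with `π u < π a`. Since LFMIS membership of `v` depends only on neighbours of
smaller rank, the two LFMISs agree below rank `π a`; hence an eliminator of rank below `π a` in one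
graph is still the minimum-rank closed neighbour of `v` in the LFMIS of the other.
-/

def IsEliminator [Fintype V] (G : SimpleGraph V) (π : V → ℝ) (v e : V) : Prop :=
  (e = v ∨ G.Adj e v) ∧ lfmis G π e ∧ ∀ u, (u = v ∨ G.Adj u v) → lfmis G π u → π e ≤ π u

theorem wellFounded_rank_lt [Finite V] (π : V → ℝ) : WellFounded fun u v : V => π u < π v :=
  Finite.wellFounded_of_trans_of_irrefl _

section

variable [Fintype V] {G G' : SimpleGraph V} {π : V → ℝ} {r : ℝ}

theorem lfmis_iff {v : V} : lfmis G π v ↔ ∀ u, G.Adj u v → π u < π v → ¬ lfmis G π u := by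
  rw [lfmis]

theorem lfmis_iff_of_adj_iff_of_lt (hE : ∀ u w, π u < r → (G.Adj u w ↔ G'.Adj u w)) {v : V}
    (hv : π v < r) : lfmis G π v ↔ lfmis G' π v := by
  induction v using (wellFounded_rank_lt π).induction with
  | _ v ih =>
    rw [lfmis_iff, lfmis_iff]
    refine forall_congr' fun u => ?_
    by_cases hu : π u < π v
    · rw [hE u v (hu.trans hv), ih u hu (hu.trans hv)]
    · simp only [hu, false_imp_iff, imp_true_iff]

theorem exists_isEliminator (G : SimpleGraph V) (π : V → ℝ) (v : V) :
    ∃ e, IsEliminator G π v e := by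
  let S := Finset.univ.filter fun u => (u = v ∨ G.Adj u v) ∧ lfmis G π u
  have hS : S.Nonempty := by
    by_cases hv : lfmis G π v
    · exact ⟨v, by simp [S, hv]⟩
    · obtain ⟨u, huv, -, hu⟩ : ∃ u, G.Adj u v ∧ π u < π v ∧ lfmis G π u := by
        simpa [lfmis_iff (v := v)] using hv
      exact ⟨u, by simp [S, huv, hu]⟩
  obtain ⟨e, he, hmin⟩ := S.exists_min_image π hS
  simp only [S, Finset.mem_filter, Finset.mem_univ, true_and] at he hmin
  exact ⟨e, he.1, he.2, fun u hu hlu => hmin u ⟨hu, hlu⟩⟩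

theorem isEliminator_eliminator (G : SimpleGraph V) (π : V → ℝ) (v : V) :
    IsEliminator G π v (eliminator G π v) := by
  have h := exists_isEliminator G π v
  unfold IsEliminator at h
  rw [eliminator, dif_pos h]
  exact h.choose_spec

theorem IsEliminator.eliminator_eq (hπ : Function.Injective π) {v e : V}
    (h : IsEliminator G π v e) : eliminator G π v = e := by
  obtain ⟨hmem, hlfmis, hmin⟩ := isEliminator_eliminator G π v
  exact hπ (le_antisymm (hmin e h.1 h.2.1) (h.2.2 _ hmem hlfmis))

theorem IsEliminator.of_adj_iff_of_lt (hE : ∀ u w, π u < r → (G.Adj u w ↔ G'.Adj u w))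
    {v e : V} (h : IsEliminator G π v e) (he : π e < r) : IsEliminator G' π v e := by
  obtain ⟨hev, hlfmis, hmin⟩ := h
  refine ⟨hev.imp_right (hE e v he).1, (lfmis_iff_of_adj_iff_of_lt hE he).1 hlfmis,
    fun u hu hlu => ?_⟩
  by_contra! hlt
  have hu_r : π u < r := hlt.trans he
  exact (hmin u (hu.imp_right (hE u v hu_r).2)
    ((lfmis_iff_of_adj_iff_of_lt hE hu_r).2 hlu)).not_gt hlt

theorem eliminator_eq_of_adj_iff_of_lt (hπ : Function.Injective π)
    (hE : ∀ u w, π u < r → (G.Adj u w ↔ G'.Adj u w)) {v : V}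
    (h : π (eliminator G π v) < r) : eliminator G' π v = eliminator G π v :=
  ((isEliminator_eliminator G π v).of_adj_iff_of_lt hE h).eliminator_eq hπ

end

/-- If `G` and `G'` differ in the single edge `(a,b)` with `π a < π b`, then every
vertex whose eliminator differs between `LFMIS(G,π)` and `LFMIS(G',π)` has both of
its eliminators of rank at least `π a`. -/
theorem affected_eliminator_rank_ge [Fintype V] (G G' : SimpleGraph V) (π : V → ℝ)
    (hπ : Function.Injective π) (a b : V) (hab : π a < π b)
    (hdiff :
      (∀ u w, G'.Adj u w ↔ (G.Adj u w ∨ (u = a ∧ w = b) ∨ (u = b ∧ w = a))) ∨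
      (∀ u w, G'.Adj u w ↔ (G.Adj u w ∧ ¬ ((u = a ∧ w = b) ∨ (u = b ∧ w = a))))) :
    ∀ v, eliminator G π v ≠ eliminator G' π v →
      π a ≤ π (eliminator G π v) ∧ π a ≤ π (eliminator G' π v) := by
  have hE : ∀ u w, π u < π a → (G.Adj u w ↔ G'.Adj u w) := by
    intro u w hu
    have hua : u ≠ a := by rintro rfl; exact lt_irrefl _ hu
    have hub : u ≠ b := by rintro rfl; exact lt_asymm hu hab
    rcases hdiff with hd | hd <;> simp [hd, hua, hub]
  intro v hne
  constructor
  · by_contra! h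
    exact hne (eliminator_eq_of_adj_iff_of_lt hπ hE h).symm
  · by_contra! h
    exact hne (eliminator_eq_of_adj_iff_of_lt hπ (fun u w hu => (hE u w hu).symm) h)
end

section
/- Let G = (V, E) be a graph, let each vertex be sampled into a set S independently with probability p ∈ (0,1], let ψ be a uniformly random permutation of S, and let I = LFMIS(G[S], ψ). Then for any vertex v and any β ≥ 1, the probability that v ∉ Γ(I) (v is neither in I nor adjacent to I) and v has at least β/p neighbors outside Γ(I) is at most e^{−β}. -/
open scoped Classical

variable {V : Type*}

/-- The subgraph of `G` induced on the sampled vertex set `S = {w | f w}`. -/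
def sampledGraph (G : SimpleGraph V) (f : V → Bool) : SimpleGraph V where
  Adj a b := G.Adj a b ∧ f a ∧ f b
  symm := ⟨fun a b h => ⟨h.1.symm, h.2.2, h.2.1⟩⟩
  loopless := ⟨fun a h => G.loopless.irrefl a h.1⟩

/-- `u ∈ Γ(I)` for `I = LFMIS(G[S], ψ)`: `u` is a sampled MIS vertex or has a
sampled MIS neighbor. -/
noncomputable def inGammaMIS [Fintype V] (G : SimpleGraph V) (f : V → Bool)
    (ψ : V → ℝ) (u : V) : Prop :=
  (f u ∧ lfmis (sampledGraph G f) ψ u) ∨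
    ∃ w, G.Adj w u ∧ f w ∧ lfmis (sampledGraph G f) ψ w

/-- The bad event for `v`: `v` survives (i.e. `v ∉ Γ(I)`) and has at least `β/p`
neighbors surviving as well. -/
noncomputable def badSurvival [Fintype V] (G : SimpleGraph V) (p β : ℝ) (v : V)
    (f : V → Bool) (ψ : V → ℝ) : Prop :=
  ¬ inGammaMIS G f ψ v ∧
    β / p ≤ ((Finset.univ.filter fun u => G.Adj u v ∧ ¬ inGammaMIS G f ψ u).card : ℝ)


open Finset

section AuxDev
variable [Fintype V]

lemma lfmis_iff_s13 (G' : SimpleGraph V) (ψ : V → ℝ) (w : V) :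
    lfmis G' ψ w ↔ ∀ u, G'.Adj u w → ψ u < ψ w → ¬ lfmis G' ψ u := by
  rw [lfmis]

lemma card_lt_card_rank (ψ : V → ℝ) {u w : V} (h : ψ u < ψ w) :
    (univ.filter fun x => ψ x < ψ u).card < (univ.filter fun x => ψ x < ψ w).card := by
  apply Finset.card_lt_card
  rw [Finset.ssubset_iff_of_subset]
  · exact ⟨u, by simp [h], by simp⟩
  · intro x hx
    simp only [mem_filter, mem_univ, true_and] at hx ⊢
    exact hx.trans h

lemma lfmis_congr_aux (G : SimpleGraph V) (ψ : V → ℝ) :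
    ∀ (n : ℕ) (w : V), (univ.filter fun x => ψ x < ψ w).card < n →
    ∀ g g' : V → Bool, (∀ x, ψ x ≤ ψ w → g x = g' x) →
    (lfmis (sampledGraph G g) ψ w → lfmis (sampledGraph G g') ψ w) := by
  intro n
  induction n with
  | zero => exact fun w h => absurd h (Nat.not_lt_zero _)
  | succ n IH =>
    intro w hw g g' hag H
    rw [lfmis_iff_s13] at H ⊢
    intro u hadj hlt hu'
    have hagu : ∀ x, ψ x ≤ ψ u → g' x = g x := fun x hx => (hag x (hx.trans hlt.le)).symm
    have hcard : (univ.filter fun x => ψ x < ψ u).card < n :=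
      lt_of_lt_of_le (card_lt_card_rank ψ hlt) (Nat.lt_succ_iff.mp hw)
    refine H u ⟨hadj.1, ?_, ?_⟩ hlt (IH u hcard g' g hagu hu')
    · rw [hag u hlt.le]; exact hadj.2.1
    · rw [hag w le_rfl]; exact hadj.2.2

lemma lfmis_congr (G : SimpleGraph V) (ψ : V → ℝ) (w : V) (g g' : V → Bool)
    (hag : ∀ x, ψ x ≤ ψ w → g x = g' x) :
    lfmis (sampledGraph G g) ψ w ↔ lfmis (sampledGraph G g') ψ w :=
  ⟨lfmis_congr_aux G ψ _ w (Nat.lt_succ_self _) g g' hag,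
   lfmis_congr_aux G ψ _ w (Nat.lt_succ_self _) g' g (fun x hx => (hag x hx).symm)⟩

/-- `u` is eligible: no sampled MIS neighbor of smaller rank. -/
noncomputable def Celig (G : SimpleGraph V) (ψ : V → ℝ) (g : V → Bool) (u : V) : Prop :=
  ∀ w, G.Adj w u → g w = true → ψ w < ψ u → ¬ lfmis (sampledGraph G g) ψ w

lemma Celig_congr (G : SimpleGraph V) (ψ : V → ℝ) (u : V) (g g' : V → Bool)
    (hag : ∀ x, ψ x < ψ u → g x = g' x) :
    Celig G ψ g u ↔ Celig G ψ g' u := by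
  have h1 : ∀ (g g' : V → Bool), (∀ x, ψ x < ψ u → g x = g' x) →
      Celig G ψ g u → Celig G ψ g' u := by
    intro g g' hag H w hadj hw hlt hl
    have hag' : ∀ x, ψ x ≤ ψ w → g x = g' x := fun x hx => hag x (lt_of_le_of_lt hx hlt)
    exact H w hadj (by rw [hag w hlt]; exact hw) hlt ((lfmis_congr G ψ w g g' hag').mpr hl)
  exact ⟨h1 g g' hag, h1 g' g (fun x hx => (hag x hx).symm)⟩

lemma lfmis_of_celig (G : SimpleGraph V) (ψ : V → ℝ) (g : V → Bool) (u : V)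
    (hC : Celig G ψ g u) : lfmis (sampledGraph G g) ψ u := by
  rw [lfmis_iff_s13]
  intro w hadj hlt
  exact hC w hadj.1 hadj.2.1 hlt

end AuxDev

section AuxDev2
variable [Fintype V]

/-- The enlarged event used in the induction. -/
noncomputable def EvBad (G : SimpleGraph V) (ψ : V → ℝ) (v : V) (k : ℕ) (g : V → Bool) : Prop :=
  (∀ u, G.Adj u v → Celig G ψ g u → g u = false) ∧
    k ≤ (univ.filter fun u => G.Adj u v ∧ Celig G ψ g u).card

lemma bad_imp_EvBad (G : SimpleGraph V) (p β : ℝ) (v : V) (f : V → Bool) (ψ : V → ℝ)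
    (hbad : badSurvival G p β v f ψ) : EvBad G ψ v ⌈β / p⌉₊ f := by
  obtain ⟨hnv, hcard⟩ := hbad
  constructor
  · intro u hadj hC
    by_contra hfu
    have hfu' : f u = true := by
      cases h : f u
      · exact absurd h hfu
      · rfl
    exact hnv (Or.inr ⟨u, hadj, hfu', lfmis_of_celig G ψ f u hC⟩)
  · have h1 : ⌈β / p⌉₊ ≤ (univ.filter fun u => G.Adj u v ∧ ¬ inGammaMIS G f ψ u).card :=
      Nat.ceil_le.mpr hcard
    refine h1.trans (Finset.card_le_card ?_)
    intro u hu
    simp only [mem_filter, mem_univ, true_and] at hu ⊢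
    refine ⟨hu.1, ?_⟩
    intro w hadj hw hlt hl
    exact hu.2 (Or.inr ⟨w, hadj, hw, hl⟩)

end AuxDev2

section SumSplit
variable [Fintype V] [DecidableEq V]

lemma sum_split (c : V → Bool → ℝ) (hc : ∀ x, c x false + c x true = 1)
    (F : (V → Bool) → ℝ) (u : V) :
    ∑ f : V → Bool, (∏ x, c x (f x)) * F f
      = ∑ f : V → Bool, (∏ x, c x (f x)) *
        (c u false * F (Function.update f u false) + c u true * F (Function.update f u true)) := by
  classical
  set W : (V → Bool) → ℝ := fun f => ∏ x ∈ univ.erase u, c x (f x) with hW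
  have hprod : ∀ f : V → Bool, (∏ x, c x (f x)) = c u (f u) * W f := by
    intro f
    rw [hW, ← Finset.mul_prod_erase univ _ (Finset.mem_univ u)]
  have hWupd : ∀ (f : V → Bool) (b : Bool), W (Function.update f u b) = W f := by
    intro f b
    apply Finset.prod_congr rfl
    intro x hx
    rw [Function.update_of_ne (Finset.ne_of_mem_erase hx)]
  set σ : (V → Bool) → (V → Bool) := fun f => Function.update f u (!(f u)) with hσ
  have hinv : Function.Involutive σ := by
    intro f
    funext x
    by_cases hx : x = u
    · subst hx; simp [hσ, Function.update_self]
    · simp [hσ, Function.update_of_ne hx]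
  have hre : ∀ (T : (V → Bool) → ℝ), ∑ f : V → Bool, T (σ f) = ∑ f : V → Bool, T f :=
    fun T => Fintype.sum_bijective σ hinv.bijective _ _ (fun f => rfl)
  have hσu : ∀ f : V → Bool, (σ f) u = !(f u) := fun f => Function.update_self _ _ _
  have hWσ : ∀ f : V → Bool, W (σ f) = W f := fun f => hWupd f _
  set T : (V → Bool) → ℝ := fun f =>
    c u false * F (Function.update f u false) + c u true * F (Function.update f u true) with hT
  have hTσ : ∀ f, T (σ f) = T f := by
    intro f
    simp only [hT, hσ, Function.update_idem]
  apply mul_left_cancel₀ (two_ne_zero (α := ℝ))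
  calc (2:ℝ) * ∑ f : V → Bool, (∏ x, c x (f x)) * F f
      = (∑ f : V → Bool, (∏ x, c x (f x)) * F f)
        + ∑ f : V → Bool, (∏ x, c x ((σ f) x)) * F (σ f) := by
        rw [two_mul]; congr 1; exact (hre fun f => (∏ x, c x (f x)) * F f).symm
    _ = ∑ f : V → Bool, W f * T f := by
        rw [← Finset.sum_add_distrib]
        apply Finset.sum_congr rfl
        intro f _
        rw [hprod f, hprod (σ f), hσu, hWσ]
        simp only [hT]
        cases h : f u
        · have e1 : σ f = Function.update f u true := by simp [hσ, h]
          have e2 : Function.update f u false = f := by rw [← h]; exact Function.update_eq_self u f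
          rw [e1, ← e2]
          simp only [Function.update_idem]
          simp only [Bool.not_false]
          ring
        · have e1 : σ f = Function.update f u false := by simp [hσ, h]
          have e2 : Function.update f u true = f := by rw [← h]; exact Function.update_eq_self u f
          rw [e1, ← e2]
          simp only [Function.update_idem]
          simp only [Bool.not_true]
          ring
    _ = (∑ f : V → Bool, (∏ x, c x ((σ f) x)) * T (σ f))
        + ∑ f : V → Bool, (∏ x, c x (f x)) * T f := by
        rw [← Finset.sum_add_distrib]
        apply Finset.sum_congr rfl
        intro f _
        rw [hprod f, hprod (σ f), hTσ, hσu, hWσ]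
        have hcc : c u (f u) + c u (!(f u)) = 1 := by
          cases h : f u
          · simpa using hc u
          · simp only [Bool.not_true]
            rw [add_comm]; exact hc u
        linear_combination (-(W f * T f)) * hcc
    _ = 2 * ∑ f : V → Bool, (∏ x, c x (f x)) * T f := by
        rw [two_mul]; congr 1; exact hre fun f => (∏ x, c x (f x)) * T f

end SumSplit

section KeyInduction
variable [Fintype V] [DecidableEq V]

/-- Bernoulli weight. -/
noncomputable def bw (p : ℝ) : V → Bool → ℝ := fun _ b => if b then p else 1 - p

lemma bw_false (p : ℝ) (u : V) : bw p u false = 1 - p := by simp [bw]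

lemma bw_true (p : ℝ) (u : V) : bw p u true = p := by simp [bw]

lemma bw_sum (p : ℝ) (x : V) : bw p x false + bw p x true = 1 := by simp [bw]

lemma sum_weight_one (p : ℝ) :
    ∑ f : V → Bool, ∏ x, bw p x (f x) = 1 := by
  have h : ∑ f ∈ Fintype.piFinset (fun _ : V => (univ : Finset Bool)), ∏ x, bw p x (f x)
      = ∏ x : V, ∑ b : Bool, bw p x b := (Finset.prod_univ_sum _ _).symm
  rw [Fintype.piFinset_univ] at h
  rw [h]
  apply Finset.prod_eq_one
  intro x _
  rw [Fintype.sum_bool, add_comm]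
  exact bw_sum p x

/-- Patch `g` on the list `L` using `f`. -/
noncomputable def patchL (g : V → Bool) (L : List V) (f : V → Bool) : V → Bool :=
  fun x => if x ∈ L then f x else g x

/-- Number of relevant neighbors of `v` outside `L`. -/
noncomputable def mrel (G : SimpleGraph V) (ψ : V → ℝ) (v : V) (g : V → Bool) (L : List V) : ℕ :=
  (univ.filter fun u => u ∉ L ∧ G.Adj u v ∧ Celig G ψ g u).card

lemma key_induction (G : SimpleGraph V) (ψ : V → ℝ) (v : V) (p : ℝ)
    (hp0 : 0 ≤ p) (hp1 : p ≤ 1) :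
    ∀ L : List V, L.Pairwise (fun a b => ψ a < ψ b) →
      (∀ x, x ∉ L → ∀ y ∈ L, ψ x < ψ y) →
      ∀ (k : ℕ) (g : V → Bool),
      ∑ f : V → Bool, (∏ x, bw p x (f x)) *
          (if EvBad G ψ v k (patchL g L f) then (1:ℝ) else 0)
        ≤ (1 - p) ^ (k - mrel G ψ v g L) := by
  intro L
  induction L with
  | nil =>
    intro _ _ k g
    have hp : ∀ f : V → Bool, patchL g [] f = g := by
      intro f; funext x; simp [patchL]
    simp only [hp]
    rw [← Finset.sum_mul, sum_weight_one p, one_mul]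
    by_cases hEv : EvBad G ψ v k g
    · rw [if_pos hEv]
      have hle : k ≤ mrel G ψ v g [] := by
        refine hEv.2.trans (le_of_eq ?_)
        unfold mrel
        congr 1
        apply Finset.filter_congr
        intro x _
        simp
      rw [Nat.sub_eq_zero_of_le hle, pow_zero]
    · rw [if_neg hEv]
      exact pow_nonneg (by linarith) _
  | cons u L' IH =>
    intro hpair hsplit k g
    have hpc := List.pairwise_cons.mp hpair
    have huL' : u ∉ L' := fun h => lt_irrefl _ (hpc.1 u h)
    have hsplit' : ∀ x, x ∉ L' → ∀ y ∈ L', ψ x < ψ y := by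
      intro x hx y hy
      by_cases hxu : x = u
      · subst hxu; exact hpc.1 y hy
      · exact hsplit x (by simp [hxu, hx]) y (by simp [hy])
    have hbelow : ∀ x, ψ x < ψ u → x ∉ (u :: L') := by
      intro x hx hmem
      rcases List.mem_cons.mp hmem with h | h
      · subst h; exact lt_irrefl _ hx
      · exact lt_asymm hx (hpc.1 x h)
    have hpatch : ∀ (f : V → Bool) (b : Bool),
        patchL g (u :: L') (Function.update f u b) = patchL (Function.update g u b) L' f := by
      intro f b; funext x
      by_cases hxu : x = u
      · subst hxu
        simp [patchL, huL', Function.update_self]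
      · by_cases hxL : x ∈ L'
        · simp [patchL, hxL, hxu, Function.update_of_ne hxu]
        · simp [patchL, hxL, hxu, Function.update_of_ne hxu]
    have hCu : ∀ b : Bool, Celig G ψ (Function.update g u b) u ↔ Celig G ψ g u := by
      intro b
      apply Celig_congr
      intro x hx
      exact Function.update_of_ne (fun he => by subst he; exact lt_irrefl _ hx) _ _
    have hCother : ∀ (b : Bool) (w : V), w ∉ (u :: L') →
        (Celig G ψ (Function.update g u b) w ↔ Celig G ψ g w) := by
      intro b w hw
      apply Celig_congr
      intro x hx
      apply Function.update_of_ne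
      intro he
      rw [he] at hx
      exact lt_asymm hx (hsplit w hw u (List.mem_cons_self))
    have hmrel : ∀ b : Bool, mrel G ψ v (Function.update g u b) L'
        = mrel G ψ v g (u :: L') + (if G.Adj u v ∧ Celig G ψ g u then 1 else 0) := by
      intro b
      unfold mrel
      by_cases hrel : G.Adj u v ∧ Celig G ψ g u
      · rw [if_pos hrel]
        have hset : (univ.filter fun w => w ∉ L' ∧ G.Adj w v ∧ Celig G ψ (Function.update g u b) w)
            = insert u (univ.filter fun w => w ∉ (u :: L') ∧ G.Adj w v ∧ Celig G ψ g w) := by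
          ext w
          simp only [Finset.mem_insert, mem_filter, mem_univ, true_and]
          by_cases hwu : w = u
          · subst hwu
            constructor
            · intro _; exact Or.inl rfl
            · intro _; exact ⟨huL', hrel.1, (hCu b).mpr hrel.2⟩
          · have hmc : (w ∉ (u :: L')) ↔ w ∉ L' := by simp [List.mem_cons, hwu]
            constructor
            · rintro ⟨h1, h2, h3⟩
              exact Or.inr ⟨hmc.mpr h1, h2, (hCother b w (hmc.mpr h1)).mp h3⟩
            · rintro (h | ⟨h1, h2, h3⟩)
              · exact absurd h hwu
              · exact ⟨hmc.mp h1, h2, (hCother b w h1).mpr h3⟩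
        rw [hset, Finset.card_insert_of_notMem]
        simp only [mem_filter, mem_univ, true_and]
        intro hmem
        exact hmem.1 (List.mem_cons_self)
      · rw [if_neg hrel, add_zero]
        congr 1
        ext w
        simp only [mem_filter, mem_univ, true_and]
        by_cases hwu : w = u
        · subst hwu
          constructor
          · rintro ⟨_, h2, h3⟩
            exact absurd ⟨h2, (hCu b).mp h3⟩ hrel
          · rintro ⟨h1, _⟩
            exact absurd List.mem_cons_self h1
        · have hmc : (w ∉ (u :: L')) ↔ w ∉ L' := by simp [List.mem_cons, hwu]
          constructor
          · rintro ⟨h1, h2, h3⟩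
            exact ⟨hmc.mpr h1, h2, (hCother b w (hmc.mpr h1)).mp h3⟩
          · rintro ⟨h1, h2, h3⟩
            exact ⟨hmc.mp h1, h2, (hCother b w h1).mpr h3⟩
    have hwnn : ∀ f : V → Bool, 0 ≤ ∏ x, bw p x (f x) := by
      intro f
      apply Finset.prod_nonneg
      intro x _
      unfold bw
      split <;> linarith
    have hSf := IH hpc.2 hsplit' k (Function.update g u false)
    have hSt := IH hpc.2 hsplit' k (Function.update g u true)
    calc ∑ f : V → Bool, (∏ x, bw p x (f x)) *
            (if EvBad G ψ v k (patchL g (u :: L') f) then (1:ℝ) else 0)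
        = ∑ f : V → Bool, (∏ x, bw p x (f x)) *
            ((1 - p) * (if EvBad G ψ v k (patchL (Function.update g u false) L' f) then (1:ℝ) else 0)
             + p * (if EvBad G ψ v k (patchL (Function.update g u true) L' f) then (1:ℝ) else 0)) := by
          rw [sum_split (bw p) (bw_sum p)
            (fun f => if EvBad G ψ v k (patchL g (u :: L') f) then (1:ℝ) else 0) u]
          apply Finset.sum_congr rfl
          intro f _
          simp only [hpatch, bw_false, bw_true]
      _ = (1 - p) * (∑ f : V → Bool, (∏ x, bw p x (f x)) *
              (if EvBad G ψ v k (patchL (Function.update g u false) L' f) then (1:ℝ) else 0))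
          + p * (∑ f : V → Bool, (∏ x, bw p x (f x)) *
              (if EvBad G ψ v k (patchL (Function.update g u true) L' f) then (1:ℝ) else 0)) := by
          rw [Finset.mul_sum, Finset.mul_sum, ← Finset.sum_add_distrib]
          apply Finset.sum_congr rfl
          intro f _
          ring
      _ ≤ (1 - p) ^ (k - mrel G ψ v g (u :: L')) := by
          by_cases hrel : G.Adj u v ∧ Celig G ψ g u
          · -- the sampled branch is impossible
            have hSt0 : (∑ f : V → Bool, (∏ x, bw p x (f x)) *
                (if EvBad G ψ v k (patchL (Function.update g u true) L' f) then (1:ℝ) else 0)) = 0 := by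
              apply Finset.sum_eq_zero
              intro f _
              have hEvF : ¬ EvBad G ψ v k (patchL (Function.update g u true) L' f) := by
                intro hEv
                have hCp : Celig G ψ (patchL (Function.update g u true) L' f) u ↔ Celig G ψ g u := by
                  apply Celig_congr
                  intro x hx
                  have hxL : x ∉ (u :: L') := hbelow x hx
                  have hxu : x ≠ u := fun he => by rw [he] at hx; exact lt_irrefl _ hx
                  have hxL' : x ∉ L' := fun h => hxL (List.mem_cons_of_mem _ h)
                  simp [patchL, hxL', Function.update_of_ne hxu]
                have hfalse := hEv.1 u hrel.1 (hCp.mpr hrel.2)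
                have hval : patchL (Function.update g u true) L' f u = true := by
                  simp [patchL, huL', Function.update_self]
                rw [hval] at hfalse
                exact absurd hfalse (by simp)
              rw [if_neg hEvF, mul_zero]
            rw [hSt0, mul_zero, add_zero]
            have hmf := hmrel false
            rw [if_pos hrel] at hmf
            calc (1 - p) * (∑ f : V → Bool, (∏ x, bw p x (f x)) *
                    (if EvBad G ψ v k (patchL (Function.update g u false) L' f) then (1:ℝ) else 0))
                ≤ (1 - p) * (1 - p) ^ (k - mrel G ψ v (Function.update g u false) L') :=
                  mul_le_mul_of_nonneg_left hSf (by linarith)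
              _ = (1 - p) ^ (k - mrel G ψ v (Function.update g u false) L' + 1) := by
                  rw [pow_succ]; ring
              _ ≤ (1 - p) ^ (k - mrel G ψ v g (u :: L')) := by
                  apply pow_le_pow_of_le_one (by linarith) (by linarith)
                  rw [hmf]
                  omega
          · have hmf := hmrel false
            have hmt := hmrel true
            rw [if_neg hrel, add_zero] at hmf hmt
            rw [hmf] at hSf
            rw [hmt] at hSt
            have h1 : (1 - p) * (∑ f : V → Bool, (∏ x, bw p x (f x)) *
                    (if EvBad G ψ v k (patchL (Function.update g u false) L' f) then (1:ℝ) else 0))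
                ≤ (1 - p) * (1 - p) ^ (k - mrel G ψ v g (u :: L')) :=
              mul_le_mul_of_nonneg_left hSf (by linarith)
            have h2 : p * (∑ f : V → Bool, (∏ x, bw p x (f x)) *
                    (if EvBad G ψ v k (patchL (Function.update g u true) L' f) then (1:ℝ) else 0))
                ≤ p * (1 - p) ^ (k - mrel G ψ v g (u :: L')) :=
              mul_le_mul_of_nonneg_left hSt hp0
            calc _ ≤ (1 - p) * (1 - p) ^ (k - mrel G ψ v g (u :: L'))
                    + p * (1 - p) ^ (k - mrel G ψ v g (u :: L')) := add_le_add h1 h2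
              _ = (1 - p) ^ (k - mrel G ψ v g (u :: L')) := by ring

end KeyInduction

section FinalDev
variable [Fintype V] [DecidableEq V]

lemma per_perm (G : SimpleGraph V) (p β : ℝ) (hp0 : 0 < p) (hp1 : p ≤ 1) (hβ : 1 ≤ β)
    (v : V) (e : V ≃ Fin (Fintype.card V)) :
    ∑ f : V → Bool, (∏ w : V, if f w then p else 1 - p) *
        (if badSurvival G p β v f (fun w => ((e w : ℕ) : ℝ)) then (1:ℝ) else 0)
      ≤ Real.exp (-β) := by
  set ψ : V → ℝ := fun w => ((e w : ℕ) : ℝ) with hψ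
  set k : ℕ := ⌈β / p⌉₊ with hk
  set L : List V := (List.finRange (Fintype.card V)).map e.symm with hL
  have hLpair : L.Pairwise (fun a b => ψ a < ψ b) := by
    rw [hL, List.pairwise_map]
    apply (List.pairwise_lt_finRange _).imp
    intro a b hab
    simp only [hψ, Equiv.apply_symm_apply]
    exact_mod_cast hab
  have hLmem : ∀ x : V, x ∈ L := by
    intro x
    rw [hL, List.mem_map]
    exact ⟨e x, List.mem_finRange _, e.symm_apply_apply x⟩
  have hpatch : ∀ f : V → Bool, patchL (fun _ => false) L f = f := by
    intro f; funext x; simp [patchL, hLmem x]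
  have hmrel : mrel G ψ v (fun _ => false) L = 0 := by
    unfold mrel
    rw [Finset.card_eq_zero, Finset.filter_eq_empty_iff]
    intro x _
    simp [hLmem x]
  have hkey := key_induction G ψ v p hp0.le hp1 L hLpair
    (fun x hx => absurd (hLmem x) hx) k (fun _ => false)
  simp only [hpatch, hmrel, Nat.sub_zero] at hkey
  have hmono : ∑ f : V → Bool, (∏ w : V, if f w then p else 1 - p) *
        (if badSurvival G p β v f ψ then (1:ℝ) else 0)
      ≤ ∑ f : V → Bool, (∏ x, bw p x (f x)) * (if EvBad G ψ v k f then (1:ℝ) else 0) := by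
    apply Finset.sum_le_sum
    intro f _
    have hw : (∏ w : V, if f w then p else 1 - p) = ∏ x, bw p x (f x) := rfl
    rw [hw]
    apply mul_le_mul_of_nonneg_left
    · by_cases hbad : badSurvival G p β v f ψ
      · rw [if_pos hbad, if_pos (bad_imp_EvBad G p β v f ψ hbad)]
      · rw [if_neg hbad]
        split <;> norm_num
    · apply Finset.prod_nonneg
      intro x _
      unfold bw
      split <;> linarith
  refine hmono.trans (hkey.trans ?_)
  have h1 : (1 : ℝ) - p ≤ Real.exp (-p) := by
    have := Real.add_one_le_exp (-p); linarith
  have h2 : (1 - p) ^ k ≤ (Real.exp (-p)) ^ k := pow_le_pow_left₀ (by linarith) h1 k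
  have h3 : (Real.exp (-p)) ^ k = Real.exp (-(p * k)) := by
    rw [← Real.exp_nat_mul]; ring_nf
  have h4 : β ≤ p * k := by
    have hceil : β / p ≤ (k : ℝ) := Nat.le_ceil _
    calc β = p * (β / p) := by field_simp
      _ ≤ p * k := mul_le_mul_of_nonneg_left hceil hp0.le
  calc (1 - p) ^ k ≤ (Real.exp (-p)) ^ k := h2
    _ = Real.exp (-(p * k)) := h3
    _ ≤ Real.exp (-β) := Real.exp_le_exp.mpr (by linarith)

end FinalDev

/-- Sample each vertex independently with probability `p`, pick a uniformly
random ordering `ψ` of the vertices, and let `I = LFMIS(G[S], ψ)`.  For any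
vertex `v` and any `β ≥ 1`, the probability that `v ∉ Γ(I)` and `v` has at least
`β/p` neighbors outside `Γ(I)` is at most `e^{-β}`. -/
theorem sampled_lfmis_residual_degree [Fintype V] [DecidableEq V]
    (G : SimpleGraph V) (p β : ℝ) (hp0 : 0 < p) (hp1 : p ≤ 1) (hβ : 1 ≤ β)
    (v : V) :
    ∑ f : V → Bool, (∏ w : V, if f w then p else 1 - p) *
      (((Finset.univ.filter fun e : V ≃ Fin (Fintype.card V) =>
          badSurvival G p β v f fun w => ((e w : ℕ) : ℝ)).card : ℝ) /
        (Fintype.card (V ≃ Fin (Fintype.card V)) : ℝ)) ≤ Real.exp (-β) := by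
  have hNpos : (0:ℝ) < (Fintype.card (V ≃ Fin (Fintype.card V)) : ℝ) := by
    have : Nonempty (V ≃ Fin (Fintype.card V)) := ⟨Fintype.equivFin V⟩
    exact_mod_cast Fintype.card_pos
  have hcard : ∀ f : V → Bool,
      ((Finset.univ.filter fun e : V ≃ Fin (Fintype.card V) =>
          badSurvival G p β v f fun w => ((e w : ℕ) : ℝ)).card : ℝ)
        = ∑ e : V ≃ Fin (Fintype.card V),
            (if badSurvival G p β v f (fun w => ((e w : ℕ) : ℝ)) then (1:ℝ) else 0) := by
    intro f
    rw [Finset.card_filter]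
    push_cast
    apply Finset.sum_congr rfl
    intro e _
    split <;> simp
  have step1 : ∑ f : V → Bool, (∏ w : V, if f w then p else 1 - p) *
      (((Finset.univ.filter fun e : V ≃ Fin (Fintype.card V) =>
          badSurvival G p β v f fun w => ((e w : ℕ) : ℝ)).card : ℝ) /
        (Fintype.card (V ≃ Fin (Fintype.card V)) : ℝ))
      = (∑ e : V ≃ Fin (Fintype.card V), ∑ f : V → Bool,
          (∏ w : V, if f w then p else 1 - p) *
            (if badSurvival G p β v f (fun w => ((e w : ℕ) : ℝ)) then (1:ℝ) else 0)) /
        (Fintype.card (V ≃ Fin (Fintype.card V)) : ℝ) := by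
    rw [Finset.sum_comm, Finset.sum_div]
    apply Finset.sum_congr rfl
    intro f _
    calc (∏ w : V, if f w then p else 1 - p) *
          (((Finset.univ.filter fun e : V ≃ Fin (Fintype.card V) =>
              badSurvival G p β v f fun w => ((e w : ℕ) : ℝ)).card : ℝ) /
            (Fintype.card (V ≃ Fin (Fintype.card V)) : ℝ))
        = ((∏ w : V, if f w then p else 1 - p) *
            ∑ e : V ≃ Fin (Fintype.card V),
              (if badSurvival G p β v f (fun w => ((e w : ℕ) : ℝ)) then (1:ℝ) else 0)) /
          (Fintype.card (V ≃ Fin (Fintype.card V)) : ℝ) := by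
          rw [hcard f, mul_div_assoc]
      _ = (∑ e : V ≃ Fin (Fintype.card V), (∏ w : V, if f w then p else 1 - p) *
            (if badSurvival G p β v f (fun w => ((e w : ℕ) : ℝ)) then (1:ℝ) else 0)) /
          (Fintype.card (V ≃ Fin (Fintype.card V)) : ℝ) := by
          rw [Finset.mul_sum]
  rw [step1, div_le_iff₀ hNpos]
  calc ∑ e : V ≃ Fin (Fintype.card V), ∑ f : V → Bool,
        (∏ w : V, if f w then p else 1 - p) *
          (if badSurvival G p β v f (fun w => ((e w : ℕ) : ℝ)) then (1:ℝ) else 0)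
      ≤ ∑ _e : V ≃ Fin (Fintype.card V), Real.exp (-β) :=
        Finset.sum_le_sum (fun e _ => per_perm G p β hp0 hp1 hβ v e)
    _ = (Fintype.card (V ≃ Fin (Fintype.card V)) : ℝ) * Real.exp (-β) := by
        rw [Finset.sum_const, nsmul_eq_mul, Finset.card_univ]
    _ = Real.exp (-β) * (Fintype.card (V ≃ Fin (Fintype.card V)) : ℝ) := mul_comm _ _
end

section
/- Let G be a graph with injective edge ranking π and let P = (e_1, ..., e_k) be a path of edges with strictly increasing ranks π(e_1) < ... < π(e_k) that alternate between membership in M = LFMM(G, π) and non-membership, with odd-indexed edges in M. In the parallel greedy process where in each round all edges that are local minima of π among surviving edges join the matching and are removed together with their incident edges, the edge e_{2i+1} does not join the matching before round i+1. In particular the parallel round complexity of LFMM under π is at least ⌈k/2⌉. -/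
open scoped Classical

variable {V : Type*}

/-- Two (unordered) edges are incident: they share an endpoint. -/
def Incid (e f : Sym2 V) : Prop := ∃ x, x ∈ e ∧ x ∈ f

/-- The lexicographically first maximal matching of `G` under edge ranking `π`:
an edge of `G` is in the LFMM iff no incident edge of strictly smaller rank is. -/
noncomputable def lfmm [Fintype V] [DecidableEq V] (G : SimpleGraph V)
    (π : Sym2 V → ℝ) : Sym2 V → Prop :=
  fun e => e ∈ G.edgeSet ∧
    ∀ f, f ∈ G.edgeSet → Incid f e → f ≠ e → π f < π e → ¬ lfmm G π f
termination_by e => (Finset.univ.filter fun f : Sym2 V => π f < π e).card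
decreasing_by
  rename_i f _ _ _ hlt
  apply Finset.card_lt_card
  constructor
  · intro w hw
    simp only [Finset.mem_filter, Finset.mem_univ, true_and] at hw ⊢
    exact hw.trans hlt
  · intro hsub
    have := hsub (Finset.mem_filter.mpr ⟨Finset.mem_univ f, hlt⟩)
    simp only [Finset.mem_filter, Finset.mem_univ, true_and] at this
    exact lt_irrefl _ this

/-- The set of surviving edges after `r` rounds of the parallel greedy LFMM
process: in each round every surviving edge that is a local minimum of `π` joins
the matching, and matched edges together with their incident edges are removed. -/
noncomputable def aliveE [Fintype V] [DecidableEq V] (G : SimpleGraph V)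
    (π : Sym2 V → ℝ) : ℕ → Set (Sym2 V)
  | 0 => G.edgeSet
  | r + 1 => {e ∈ aliveE G π r |
      ¬ ∃ f ∈ aliveE G π r, Incid f e ∧
        ∀ g ∈ aliveE G π r, Incid g f → g ≠ f → π f < π g}

/-- Edge `e` joins the matching at round `r` (0-based) of the parallel greedy
process: it survives to round `r` and is a local minimum of `π` there. -/
noncomputable def joinsAtRound [Fintype V] [DecidableEq V] (G : SimpleGraph V)
    (π : Sym2 V → ℝ) (r : ℕ) (e : Sym2 V) : Prop :=
  e ∈ aliveE G π r ∧ ∀ f ∈ aliveE G π r, Incid f e → f ≠ e → π e < π f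

section Aux


lemma Incid.symm {e f : Sym2 V} (h : Incid e f) : Incid f e := by
  obtain ⟨x, hx, hy⟩ := h; exact ⟨x, hy, hx⟩

lemma incid_self (e : Sym2 V) : Incid e e := by
  induction e using Sym2.ind with
  | _ a b => exact ⟨a, by simp, by simp⟩

lemma card_lt_of_rank_lt [Fintype V] {π : Sym2 V → ℝ} {f e : Sym2 V} (hlt : π f < π e) :
    (Finset.univ.filter fun g : Sym2 V => π g < π f).card <
    (Finset.univ.filter fun g : Sym2 V => π g < π e).card := by
  apply Finset.card_lt_card
  constructor
  · intro w hw
    simp only [Finset.mem_filter, Finset.mem_univ, true_and] at hw ⊢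
    exact hw.trans hlt
  · intro hsub
    have := hsub (Finset.mem_filter.mpr ⟨Finset.mem_univ f, hlt⟩)
    simp only [Finset.mem_filter, Finset.mem_univ, true_and] at this
    exact lt_irrefl _ this

variable [Fintype V] [DecidableEq V] {G : SimpleGraph V} {π : Sym2 V → ℝ}

lemma aliveE_succ_subset (r : ℕ) : aliveE G π (r + 1) ⊆ aliveE G π r := by
  intro e he; rw [aliveE] at he; exact he.1

lemma aliveE_antitone {r s : ℕ} (h : r ≤ s) : aliveE G π s ⊆ aliveE G π r := by
  induction s with
  | zero => simpa [Nat.le_zero.mp h] using subset_rfl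
  | succ n ih =>
    rcases Nat.lt_or_ge r (n + 1) with h' | h'
    · exact (aliveE_succ_subset n).trans (ih (Nat.lt_succ_iff.mp h'))
    · have : r = n + 1 := le_antisymm h h'
      subst this; exact subset_rfl

lemma aliveE_subset_edgeSet (r : ℕ) : aliveE G π r ⊆ G.edgeSet :=
  aliveE_antitone (Nat.zero_le r)

lemma join_kills {r : ℕ} {f e : Sym2 V} (hj : joinsAtRound G π r f)
    (hI : Incid f e) (he : e ∈ aliveE G π r) : e ∉ aliveE G π (r + 1) := by
  intro hcon
  rw [aliveE] at hcon
  exact hcon.2 ⟨f, hj.1, hI, hj.2⟩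

lemma lfmm_unique {e f : Sym2 V} (hπ : Function.Injective π)
    (he : lfmm G π e) (hf : lfmm G π f) (hI : Incid e f) : e = f := by
  by_contra hne
  rcases lt_trichotomy (π e) (π f) with h | h | h
  · rw [lfmm] at hf
    exact hf.2 e ((by rw [lfmm] at he; exact he.1)) hI hne h he
  · exact hne (hπ h)
  · rw [lfmm] at he
    exact he.2 f ((by rw [lfmm] at hf; exact hf.1)) hI.symm (fun h' => hne h'.symm) h hf

lemma exists_death {g : Sym2 V} {r : ℕ} (h0 : g ∈ aliveE G π 0) (hr : g ∉ aliveE G π r) :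
    ∃ t, g ∈ aliveE G π t ∧ g ∉ aliveE G π (t + 1) := by
  by_contra hcon
  push_neg at hcon
  apply hr
  have : ∀ n, g ∈ aliveE G π n := by
    intro n
    induction n with
    | zero => exact h0
    | succ n ih => exact hcon n ih
  exact this r

theorem joins_imp_lfmm (hπ : Function.Injective π) (e : Sym2 V) :
    (∀ r, joinsAtRound G π r e → lfmm G π e) ∧
    (∀ r, lfmm G π e → e ∈ aliveE G π r → e ∉ aliveE G π (r + 1) →
      joinsAtRound G π r e) := by
  constructor
  · rintro r ⟨heA, hemin⟩
    rw [lfmm]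
    refine ⟨aliveE_subset_edgeSet r heA, ?_⟩
    intro g hgE hgI hgne hglt hglfmm
    by_cases hg : g ∈ aliveE G π r
    · exact absurd (hemin g hg hgI hgne) (not_lt.mpr hglt.le)
    · obtain ⟨t, ht, ht'⟩ := exists_death (by rw [aliveE]; exact hgE) hg
      have htr : t < r := by
        by_contra hle
        exact hg (aliveE_antitone (not_lt.mp hle) ht)
      have hgj : joinsAtRound G π t g :=
        (joins_imp_lfmm hπ g).2 t hglfmm ht ht'
      have heAt : e ∈ aliveE G π (t + 1) := aliveE_antitone htr heA
      exact join_kills hgj hgI (aliveE_antitone (Nat.le_of_lt htr) heA) heAt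
  · intro r hlf heA heA'
    rw [aliveE] at heA'
    simp only [Set.mem_setOf_eq, not_and, not_not] at heA'
    obtain ⟨f, hfA, hfI, hfmin⟩ := heA' heA
    by_cases hfe : f = e
    · subst hfe; exact ⟨hfA, hfmin⟩
    · exfalso
      have hflt : π f < π e := hfmin e heA hfI.symm (fun h => hfe h.symm)
      have hflf : lfmm G π f := (joins_imp_lfmm hπ f).1 r ⟨hfA, hfmin⟩
      rw [lfmm] at hlf
      exact hlf.2 f (aliveE_subset_edgeSet r hfA) hfI hfe hflt hflf
termination_by (Finset.univ.filter fun g : Sym2 V => π g < π e).card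
decreasing_by
  · exact card_lt_of_rank_lt (hglt)
  · exact card_lt_of_rank_lt (hfmin e heA hfI.symm (fun h => hfe h.symm))


end Aux

/-- Let `l = (e_1, …, e_k)` be a path of edges of `G` with strictly increasing
ranks that alternate between membership in `LFMM(G, π)` (odd 1-based indices,
i.e. even 0-based indices) and non-membership.  Then in the parallel greedy
process the edge `e_{2i+1}` (0-based index `2i`) does not join the matching
before round `i + 1` (1-based), i.e. if it joins at 0-based round `r` then
`i ≤ r`; consequently the parallel round complexity is at least `⌈k/2⌉`. -/

theorem alternating_path_round_lower_bound [Fintype V] [DecidableEq V]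
    (G : SimpleGraph V) (π : Sym2 V → ℝ) (hπ : Function.Injective π)
    (l : List (Sym2 V)) (hedges : ∀ e ∈ l, e ∈ G.edgeSet)
    (hchain : l.Chain' fun e f => e ≠ f ∧ Incid e f)
    (hmono : l.Pairwise fun e f => π e < π f)
    (halt : ∀ i (hi : i < l.length),
      (Even i → lfmm G π (l[i]'hi)) ∧ (Odd i → ¬ lfmm G π (l[i]'hi))) :
    (∀ i (hi : 2 * i < l.length) (r : ℕ),
      joinsAtRound G π r (l[2 * i]'hi) → i ≤ r) ∧
    ∀ R : ℕ, aliveE G π R = ∅ → (l.length + 1) / 2 ≤ R := by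
  have hmono' : ∀ i j (hi : i < l.length) (hj : j < l.length), i < j →
      π (l[i]'hi) < π (l[j]'hj) := by
    rw [List.pairwise_iff_getElem] at hmono
    exact fun i j hi hj h => hmono i j hi hj h
  have hchain' : ∀ i (h : i + 1 < l.length),
      (l[i]'(by omega)) ≠ (l[i+1]'h) ∧ Incid (l[i]'(by omega)) (l[i+1]'h) := by
    rw [show l.Chain' (fun e f => e ≠ f ∧ Incid e f) ↔ l.IsChain (fun e f => e ≠ f ∧ Incid e f) from Iff.rfl, List.isChain_iff_getElem] at hchain
    intro i h
    simpa using hchain i (by omega)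
  have key : ∀ i j (hj : j < l.length), 2 * i ≤ j → (Even j ∨ j + 1 < l.length) →
      (l[j]'hj) ∈ aliveE G π i := by
    intro i
    induction i with
    | zero =>
      intro j hj _ _
      rw [aliveE]
      exact hedges _ (l.getElem_mem hj)
    | succ i ih =>
      intro j hj h2 hcond
      obtain ⟨m, rfl⟩ : ∃ m, j = m + 2 := ⟨j - 2, by omega⟩
      have hAj : (l[m+2]'hj) ∈ aliveE G π i := ih (m+2) hj (by omega) hcond
      rw [aliveE]
      refine ⟨hAj, ?_⟩
      rintro ⟨f, hfA, hfI, hfmin⟩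
      have hflf : lfmm G π f := (joins_imp_lfmm hπ f).1 i ⟨hfA, hfmin⟩
      have hm1 : m + 1 < l.length := by omega
      have hAm1 : (l[m+1]'hm1) ∈ aliveE G π i := ih (m+1) hm1 (by omega) (Or.inr hj)
      have hc12 := hchain' (m+1) hj
      have hmono12 : π (l[m+1]'hm1) < π (l[m+2]'hj) := hmono' (m+1) (m+2) hm1 hj (by omega)
      rcases Nat.even_or_odd (m+2) with hev | hod
      · -- even: l[m+2] ∈ lfmm, so the killer f must be l[m+2] itself,
        -- but l[m+1] is alive and smaller, contradiction
        have hlf2 : lfmm G π (l[m+2]'hj) := (halt (m+2) hj).1 hev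
        have hfeq : f = l[m+2]'hj := lfmm_unique hπ hflf hlf2 hfI
        subst hfeq
        exact absurd hmono12 (asymm (hfmin _ hAm1 hc12.2 hc12.1))
      · -- odd: analyze the killer's shared vertex
        have hmod : (m + 2) % 2 = 1 := Nat.odd_iff.mp hod
        have hm3 : m + 3 < l.length := by
          rcases hcond with h | h
          · have := Nat.even_iff.mp h; omega
          · omega
        have hnl2 : ¬ lfmm G π (l[m+2]'hj) := (halt (m+2) hj).2 hod
        have hfne2 : f ≠ l[m+2]'hj := fun h => hnl2 (h ▸ hflf)
        have hflt : π f < π (l[m+2]'hj) :=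
          hfmin _ hAj hfI.symm (fun h => hfne2 h.symm)
        obtain ⟨x, hxf, hxe⟩ := hfI
        obtain ⟨u, hu1, hu2⟩ := hc12.2
        have hc23 := hchain' (m+2) hm3
        obtain ⟨w, hw2, hw3⟩ := hc23.2
        have hlf1 : lfmm G π (l[m+1]'hm1) := (halt (m+1) hm1).1
          (Nat.even_iff.mpr (by omega))
        have hlf3 : lfmm G π (l[m+3]'hm3) := (halt (m+3) hm3).1
          (Nat.even_iff.mpr (by omega))
        have hne13 : (l[m+1]'hm1) ≠ (l[m+3]'hm3) := fun h =>
          absurd (hmono' (m+1) (m+3) hm1 hm3 (by omega)) (by rw [h]; exact lt_irrefl _)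
        have huw : u ≠ w := by
          intro h; subst h
          exact hne13 (lfmm_unique hπ hlf1 hlf3 ⟨u, hu1, hw3⟩)
        have hxuw : x = u ∨ x = w := by
          have h2 : (l[m+2]'hj) = s(u, w) := (Sym2.mem_and_mem_iff huw).mp ⟨hu2, hw2⟩
          rw [h2] at hxe
          exact Sym2.mem_iff.mp hxe
        rcases hxuw with hx | hx
        · -- x = u : f shares a vertex with l[m+1]
          have hIf1 : Incid f (l[m+1]'hm1) := ⟨x, hxf, by rw [hx]; exact hu1⟩
          by_cases hf1 : f = l[m+1]'hm1
          · subst hf1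
            have hm0 : m < l.length := by omega
            have hAm : (l[m]'hm0) ∈ aliveE G π i := ih m hm0 (by omega) (Or.inr (by omega))
            have hc01 := hchain' m hm1
            exact absurd (hmono' m (m+1) hm0 hm1 (by omega))
              (asymm (hfmin _ hAm hc01.2 hc01.1))
          · rcases lt_or_gt_of_ne (fun h : π f = π (l[m+1]'hm1) => hf1 (hπ h)) with hlt | hgt
            · rw [lfmm] at hlf1
              exact hlf1.2 f (aliveE_subset_edgeSet i hfA) hIf1 hf1 hlt hflf
            · exact absurd hgt (asymm (hfmin _ hAm1 hIf1.symm (fun h => hf1 h.symm)))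
        · -- x = w : f shares a vertex with l[m+3]
          have hflt3 : π f < π (l[m+3]'hm3) := hflt.trans (hmono' (m+2) (m+3) hj hm3 (by omega))
          have hfne3 : f ≠ l[m+3]'hm3 := fun h => by rw [h] at hflt3; exact lt_irrefl _ hflt3
          rw [lfmm] at hlf3
          exact hlf3.2 f (aliveE_subset_edgeSet i hfA) ⟨x, hxf, by rw [hx]; exact hw3⟩
            hfne3 hflt3 hflf
  refine ⟨?_, ?_⟩
  · intro i hi r hjoin
    by_contra hcon
    push_neg at hcon
    have hA : (l[2*i]'hi) ∈ aliveE G π i := key i (2*i) hi le_rfl (Or.inl ⟨i, two_mul i⟩)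
    have hdead : (l[2*i]'hi) ∉ aliveE G π (r+1) :=
      join_kills hjoin (incid_self _) hjoin.1
    exact hdead (aliveE_antitone (by omega) hA)
  · intro R hR
    by_contra hcon
    push_neg at hcon
    have hk : 0 < l.length := by omega
    have hj2 : 2 * ((l.length - 1)/2) < l.length := by omega
    have hA := key ((l.length - 1)/2) _ hj2 le_rfl (Or.inl ⟨_, two_mul _⟩)
    have hfin := aliveE_antitone (show R ≤ (l.length - 1)/2 by omega) hA
    rw [hR] at hfin
    exact hfin
end
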